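/- arXiv:1509.08145 — 2 statements merged into one kernel-verified Lean document; each statement's English description precedes it below -/
import Mathlib

section
/- Let φ* be an optimal linear arrangement of a tree T on n ≥ 2 vertices and let P = (w₁,…,w_l) be its spinal path. Then φ* is strictly increasing along P, i.e. φ*(w_i) < φ*(w_{i+1}) for all 1 ≤ i < l. -/
/-!
If the spine were not increasing, some spine edge `ab` would have `φ b < φ a`. Since `ab` is a
bridge, deleting it leaves a side containing `a` and the first vertex `v` and a side containing
`b` and the last vertex `u`. Let `ψ` list the `a`-side first and then the `b`-side, each in the
order of `φ`. The cost of a layout is the sum over the gaps between consecutive positions of the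
number of edges crossing the gap, and gap by gap `ψ` does no worse than `φ`: apart from `ab`,
every edge crossing a gap of `ψ` lies within the side of the vertex just before the gap and
already crossed the corresponding gap of `φ`. When `ab` crosses a gap of `ψ`, a path inside the
opposite side (from `v` to `a`, or from `b` to `u`) supplies an edge that crossed the gap of `φ`
and no longer does. At the gap after `b`, the edge `ab` crosses under `φ` but not under `ψ`, so
`ψ` is strictly cheaper.
-/

open Finset SimpleGraph
open scoped Classical

variable {V : Type*}

/-- The linear arrangement cost of a layout `φ` of a graph `G`. -/
noncomputable def layoutCost [Fintype V] (G : SimpleGraph V)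
    (φ : V ≃ Fin (Fintype.card V)) : ℕ :=
  ∑ e ∈ G.edgeFinset,
    Sym2.lift ⟨fun u v => (((φ u : ℕ) : ℤ) - ((φ v : ℕ) : ℤ)).natAbs,
      fun u v => by simp only []; omega⟩ e

/-- `φ` is an optimal linear arrangement of `G`. -/
def IsOLA [Fintype V] (G : SimpleGraph V) (φ : V ≃ Fin (Fintype.card V)) : Prop :=
  ∀ ψ : V ≃ Fin (Fintype.card V), layoutCost G φ ≤ layoutCost G ψ

/-- The optimal linear arrangement cost of `G`. -/
noncomputable def olaCost [Fintype V] (G : SimpleGraph V) : ℕ :=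
  sInf (Set.range (layoutCost G))

/-- Deleting a vertex: keep the vertex type, remove all incident edges. -/
def deleteVertex (G : SimpleGraph V) (w : V) : SimpleGraph V where
  Adj x y := G.Adj x y ∧ x ≠ w ∧ y ≠ w
  symm := ⟨fun x y h => ⟨h.1.symm, h.2.2, h.2.1⟩⟩
  loopless := ⟨fun x h => G.loopless.irrefl x h.1⟩

/-- A Halin graph decomposition `H = T ⊎ C`. -/
structure IsHalin [Fintype V] (T C : SimpleGraph V) : Prop where
  tree : T.IsTree
  nonleaf_deg : ∀ v : V, T.degree v ≠ 1 → 3 ≤ T.degree v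
  edge_disjoint : Disjoint T.edgeSet C.edgeSet
  cycle_support : ∀ v : V, v ∈ C.support ↔ T.degree v = 1
  cycle_degree : ∀ v ∈ C.support, C.degree v = 2
  cycle_connected : ∀ u v : V, u ∈ C.support → v ∈ C.support → C.Reachable u v
  three_paths : ∀ u v : V, u ≠ v → ∃ p q r : (T ⊔ C).Walk u v,
    p.IsPath ∧ q.IsPath ∧ r.IsPath ∧
    (∀ e ∈ p.edges, e ∉ q.edges) ∧ (∀ e ∈ p.edges, e ∉ r.edges) ∧
    (∀ e ∈ q.edges, e ∉ r.edges) ∧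
    (∀ e ∈ p.edges, e ∈ T.edgeSet) ∧
    ¬ (∀ e ∈ q.edges, e ∈ T.edgeSet) ∧ ¬ (∀ e ∈ r.edges, e ∈ T.edgeSet)

/-- The subtree hanging at `c` after removing vertex `v`. -/
def subtreeAt (T : SimpleGraph V) (v c : V) : Set V :=
  {x | (deleteVertex T v).Reachable x c}

/-- A rooted tree is recursively balanced. -/
def IsRecBalanced (T : SimpleGraph V) (r : V) : Prop :=
  ∀ v c c' : V, T.Adj v c → T.Adj v c' →
    T.dist r c = T.dist r v + 1 → T.dist r c' = T.dist r v + 1 →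
    Nat.card (subtreeAt T v c) = Nat.card (subtreeAt T v c')

/-- `r` is a central vertex of `T`. -/
def IsCentral [Fintype V] (T : SimpleGraph V) (r : V) : Prop :=
  ∀ u : V, u ≠ r → Nat.card (subtreeAt T r u) ≤ Fintype.card V / 2

lemma Finset.card_le_card_of_erase_subset {α : Type*} [DecidableEq α] {s t : Finset α} {a : α}
    (h : s.erase a ⊆ t) (ha : a ∈ s → ∃ b ∈ t, b ∉ s) : #s ≤ #t := by
  by_cases has : a ∈ s
  · obtain ⟨b, hbt, hbs⟩ := ha has
    have hsub : s.erase a ⊆ t.erase b := fun x hx =>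
      mem_erase.mpr ⟨fun hxb => hbs (hxb ▸ mem_of_mem_erase hx), h hx⟩
    rw [← card_erase_add_one has, ← card_erase_add_one hbt]
    exact Nat.add_le_add_right (card_le_card hsub) 1
  · exact card_le_card (erase_eq_of_notMem has ▸ h)

namespace SimpleGraph

lemma Reachable.exists_adj_le_lt {α : Type*} [LinearOrder α] {G : SimpleGraph V} {x y : V}
    (h : G.Reachable x y) (f : V → α) {k : α} (hx : f x ≤ k) (hy : k < f y) :
    ∃ p q, G.Adj p q ∧ G.Reachable x p ∧ f p ≤ k ∧ k < f q := by
  obtain ⟨w⟩ := h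
  obtain ⟨d, hd, hp, hq⟩ := w.exists_boundary_dart {z | f z ≤ k} hx (not_le.mpr hy)
  exact ⟨d.fst, d.snd, d.adj, ⟨w.takeUntil _ (w.dart_fst_mem_support_of_mem_darts hd)⟩, hp,
    not_le.mp hq⟩

lemma Walk.IsPath.reachable_deleteEdges_getVert {G : SimpleGraph V} {v u : V}
    {p : G.Walk v u} (hp : p.IsPath) {i : ℕ} (hi : i < p.length) :
    (G.deleteEdges {s(p.getVert i, p.getVert (i + 1))}).Reachable v (p.getVert i) ∧
      (G.deleteEdges {s(p.getVert i, p.getVert (i + 1))}).Reachable (p.getVert (i + 1)) u := by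
  have hi' : i < p.edges.length := by rwa [Walk.length_edges]
  have hsplit : p.edges = p.edges.take i ++ p.edges[i] :: p.edges.drop (i + 1) := by
    rw [List.cons_getElem_drop_succ, List.take_append_drop]
  have hnodup := hp.isTrail.edges_nodup
  rw [hsplit, List.nodup_append, List.nodup_cons] at hnodup
  rw [← Walk.getElem_edges hi']
  refine ⟨⟨(p.take i).toDeleteEdge _ ?_⟩, ⟨(p.drop (i + 1)).toDeleteEdge _ ?_⟩⟩
  · rw [Walk.edges_take]
    exact fun h => hnodup.2.2 _ h _ List.mem_cons_self rfl
  · rw [Walk.edges_drop]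
    exact hnodup.2.1.1

end SimpleGraph

section Layout

variable [Fintype V]

-- The edges crossing the gap just after position `χ z`.
noncomputable def cutAt (G : SimpleGraph V) (χ : V ≃ Fin (Fintype.card V)) (z : V) :
    Finset (Sym2 V) :=
  G.edgeFinset.filter fun e => ∃ x y, e = s(x, y) ∧ χ x ≤ χ z ∧ χ z < χ y

lemma mk_mem_cutAt {G : SimpleGraph V} {χ : V ≃ Fin (Fintype.card V)} {x y z : V}
    (h : G.Adj x y) (hx : χ x ≤ χ z) (hy : χ z < χ y) : s(x, y) ∈ cutAt G χ z :=
  mem_filter.mpr ⟨mem_edgeFinset.mpr h, x, y, rfl, hx, hy⟩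

lemma card_filter_straddle_eq_natAbs (χ : V ≃ Fin (Fintype.card V)) (x y : V) :
    #{z | ∃ p q, s(x, y) = s(p, q) ∧ χ p ≤ χ z ∧ χ z < χ q} =
      (((χ x : ℕ) : ℤ) - ((χ y : ℕ) : ℤ)).natAbs := by
  have : ({z | ∃ p q, s(x, y) = s(p, q) ∧ χ p ≤ χ z ∧ χ z < χ q} : Finset V) =
      (Ico (min (χ x) (χ y)) (max (χ x) (χ y))).map χ.symm.toEmbedding := by
    ext z
    simp only [mem_filter, mem_univ, true_and, mem_map_equiv, Equiv.symm_symm, mem_Ico]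
    constructor
    · rintro ⟨p, q, h, h1, h2⟩
      rcases Sym2.eq_iff.mp h with ⟨rfl, rfl⟩ | ⟨rfl, rfl⟩ <;> grind
    · intro h
      rcases le_total (χ x) (χ y) with hxy | hxy
      · exact ⟨x, y, rfl, by grind⟩
      · exact ⟨y, x, Sym2.eq_swap, by grind⟩
  rw [this, card_map, Fin.card_Ico]
  simp only [Fin.coe_max, Fin.coe_min]
  omega

lemma layoutCost_eq_sum_card_cutAt (G : SimpleGraph V) (χ : V ≃ Fin (Fintype.card V)) :
    layoutCost G χ = ∑ z, #(cutAt G χ z) := by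
  simp only [cutAt, card_filter]
  rw [Finset.sum_comm, layoutCost]
  refine sum_congr rfl fun e _ => ?_
  induction e using Sym2.ind with
  | _ x y => exact (card_filter_straddle_eq_natAbs χ x y).symm.trans (card_filter _ _)

lemma exists_equiv_fin_lt_iff {α : Type*} [LinearOrder α] {f : V → α}
    (hf : Function.Injective f) :
    ∃ ψ : V ≃ Fin (Fintype.card V), ∀ x y, ψ x < ψ y ↔ f x < f y :=
  letI : LinearOrder V := LinearOrder.lift' f hf
  let e := (Fintype.orderIsoFinOfCardEq V rfl).symm
  ⟨e.toEquiv, fun _ _ => e.lt_iff_lt⟩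

structure IsBlockRearrangement (A : Set V) (φ ψ : V ≃ Fin (Fintype.card V)) : Prop where
  lt_iff_of_iff : ∀ ⦃x y⦄, (x ∈ A ↔ y ∈ A) → (ψ x < ψ y ↔ φ x < φ y)
  lt_of_mem_of_notMem : ∀ ⦃x y⦄, x ∈ A → y ∉ A → ψ x < ψ y

lemma exists_isBlockRearrangement (A : Set V) (φ : V ≃ Fin (Fintype.card V)) :
    ∃ ψ, IsBlockRearrangement A φ ψ := by
  let key : V → ℕ := fun x => (if x ∈ A then 0 else Fintype.card V) + φ x
  have hkey : Function.Injective key := fun x y h => by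
    simp only [key] at h
    split_ifs at h <;> exact φ.injective (Fin.ext (by omega))
  obtain ⟨ψ, hψ⟩ := exists_equiv_fin_lt_iff hkey
  refine ⟨ψ, fun x y hxy => ?_, fun x y hx hy => ?_⟩
  · by_cases hx : x ∈ A
    · simp [hψ, key, hx, hxy.mp hx]
    · simp [hψ, key, hx, hxy.not.mp hx]
  · simp only [hψ, key, hx, hy, if_true, if_false]
    omega

end Layout

section Rearrangement

variable [Fintype V] {G : SimpleGraph V} {A : Set V} {a b : V}
  {φ ψ : V ≃ Fin (Fintype.card V)}

namespace IsBlockRearrangement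

lemma le_iff_of_iff (hψ : IsBlockRearrangement A φ ψ) {x y : V} (hxy : x ∈ A ↔ y ∈ A) :
    ψ x ≤ ψ y ↔ φ x ≤ φ y := by
  simpa only [not_lt] using (hψ.lt_iff_of_iff hxy.symm).not

lemma notMem_cutAt (hψ : IsBlockRearrangement A φ ψ) {x y z : V} (hxy : x ∈ A ↔ y ∈ A)
    (hxz : ¬(x ∈ A ↔ z ∈ A)) : s(x, y) ∉ cutAt G ψ z := by
  simp only [cutAt, mem_filter, not_and, not_exists]
  intro _ p q hpq hp hq
  have hside : (p ∈ A ↔ z ∉ A) ∧ (q ∈ A ↔ z ∉ A) := by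
    rcases Sym2.eq_iff.mp hpq with ⟨rfl, rfl⟩ | ⟨rfl, rfl⟩ <;> tauto
  by_cases hz : z ∈ A
  · exact (hψ.lt_of_mem_of_notMem hz (hside.1.not.mpr (not_not.mpr hz))).not_ge hp
  · exact (hψ.lt_of_mem_of_notMem (hside.2.mpr hz) hz).not_gt hq

lemma mk_mem_cutAt_iff (hψ : IsBlockRearrangement A φ ψ) (ha : a ∈ A) (hb : b ∉ A) {z : V} :
    s(a, b) ∈ cutAt G ψ z ↔ G.Adj a b ∧ ψ a ≤ ψ z ∧ ψ z < ψ b := by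
  refine ⟨fun h => ?_, fun ⟨hab, haz, hzb⟩ => mk_mem_cutAt hab haz hzb⟩
  obtain ⟨hab, x, y, hxy, hx, hy⟩ := mem_filter.mp h
  rcases Sym2.eq_iff.mp hxy with ⟨rfl, rfl⟩ | ⟨rfl, rfl⟩
  · exact ⟨mem_edgeFinset.mp hab, hx, hy⟩
  · exact absurd (hψ.lt_of_mem_of_notMem ha hb) (hx.trans_lt hy).not_gt

variable (hψ : IsBlockRearrangement A φ ψ)
  (hA : ∀ ⦃x y⦄, (G.deleteEdges {s(a, b)}).Reachable x y → (x ∈ A ↔ y ∈ A))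
include hψ hA

lemma cutAt_erase_subset (z : V) : (cutAt G ψ z).erase s(a, b) ⊆ cutAt G φ z := by
  intro e he
  obtain ⟨hne, he⟩ := mem_erase.mp he
  obtain ⟨hG, x, y, rfl, hx, hy⟩ := mem_filter.mp he
  have hxy : x ∈ A ↔ y ∈ A :=
    hA (deleteEdges_adj.mpr ⟨mem_edgeFinset.mp hG, by simpa using hne⟩).reachable
  by_cases hxz : x ∈ A ↔ z ∈ A
  · exact mk_mem_cutAt (mem_edgeFinset.mp hG) ((hψ.le_iff_of_iff hxz).mp hx)
      ((hψ.lt_iff_of_iff (hxy.symm.trans hxz).symm).mp hy)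
  · exact absurd he (hψ.notMem_cutAt hxy hxz)

lemma exists_mem_cutAt_notMem_cutAt {x y z : V} (hxy : (G.deleteEdges {s(a, b)}).Reachable x y)
    (hx : φ x ≤ φ z) (hy : φ z < φ y) (hxz : ¬(x ∈ A ↔ z ∈ A)) :
    ∃ e ∈ cutAt G φ z, e ∉ cutAt G ψ z := by
  obtain ⟨p, q, hpq, hxp, hp, hq⟩ := hxy.exists_adj_le_lt φ hx hy
  have hxp := hA hxp
  exact ⟨s(p, q), mk_mem_cutAt (G.deleteEdges_le _ hpq) hp hq,
    hψ.notMem_cutAt (hA hpq.reachable) (by tauto)⟩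

variable {v u : V} (ha : a ∈ A) (hb : b ∉ A) (hlt : φ b < φ a)
include ha hb hlt

lemma card_cutAt_le (hva : (G.deleteEdges {s(a, b)}).Reachable v a)
    (hbu : (G.deleteEdges {s(a, b)}).Reachable b u) (hv : ∀ z, φ v ≤ φ z)
    (hu : ∀ z, φ z ≤ φ u) (z : V) : #(cutAt G ψ z) ≤ #(cutAt G φ z) := by
  refine card_le_card_of_erase_subset (hψ.cutAt_erase_subset hA z) fun habz => ?_
  obtain ⟨-, haz, hzb⟩ := (hψ.mk_mem_cutAt_iff ha hb).mp habz
  have hv' : v ∈ A := (hA hva).mpr ha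
  have hu' : u ∉ A := (hA hbu).not.mp hb
  by_cases hz : z ∈ A
  · have hzu : φ z < φ u := (hu z).lt_of_ne fun h => hu' (φ.injective h ▸ hz)
    exact hψ.exists_mem_cutAt_notMem_cutAt hA hbu
      (hlt.le.trans ((hψ.le_iff_of_iff (iff_of_true ha hz)).mp haz)) hzu (by tauto)
  · exact hψ.exists_mem_cutAt_notMem_cutAt hA hva (hv z)
      (((hψ.lt_iff_of_iff (iff_of_false hz hb)).mp hzb).trans hlt) (by tauto)

lemma card_cutAt_lt (hab : G.Adj a b) : #(cutAt G ψ b) < #(cutAt G φ b) := by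
  have hnot : s(a, b) ∉ cutAt G ψ b := fun h =>
    lt_irrefl _ ((hψ.mk_mem_cutAt_iff ha hb).mp h).2.2
  refine card_lt_card ((ssubset_iff_of_subset ?_).mpr ⟨s(a, b), ?_, hnot⟩)
  · simpa only [erase_eq_of_notMem hnot] using hψ.cutAt_erase_subset hA b
  · rw [Sym2.eq_swap]
    exact mk_mem_cutAt hab.symm le_rfl hlt

end IsBlockRearrangement

theorem IsOLA.lt_of_isBridge {φ : V ≃ Fin (Fintype.card V)} (hφ : IsOLA G φ) {v u : V}
    (hab : G.Adj a b) (hbr : G.IsBridge s(a, b))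
    (hva : (G.deleteEdges {s(a, b)}).Reachable v a)
    (hbu : (G.deleteEdges {s(a, b)}).Reachable b u) (hv : ∀ z, φ v ≤ φ z)
    (hu : ∀ z, φ z ≤ φ u) : φ a < φ b := by
  refine (lt_or_gt_of_ne (φ.injective.ne hab.ne)).resolve_right fun hlt => ?_
  set D := G.deleteEdges {s(a, b)}
  obtain ⟨ψ, hψ⟩ := exists_isBlockRearrangement {x | D.Reachable a x} φ
  have hA : ∀ ⦃x y⦄, D.Reachable x y → (D.Reachable a x ↔ D.Reachable a y) :=
    fun x y hxy => ⟨fun h => h.trans hxy, fun h => h.trans hxy.symm⟩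
  have hb : ¬D.Reachable a b := isBridge_iff.mp hbr
  have hcost : layoutCost G ψ < layoutCost G φ := by
    rw [layoutCost_eq_sum_card_cutAt, layoutCost_eq_sum_card_cutAt]
    exact sum_lt_sum (fun z _ => hψ.card_cutAt_le hA .rfl hb hlt hva hbu hv hu z)
      ⟨b, mem_univ b, hψ.card_cutAt_lt hA .rfl hb hlt hab⟩
  exact (hφ ψ).not_gt hcost

end Rearrangement

theorem tree_ola_monotone_on_spine_general [Fintype V]
    (T : SimpleGraph V) (hT : T.IsTree)
    (φ : V ≃ Fin (Fintype.card V)) (hφ : IsOLA T φ)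
    (v u : V) (hv : (φ v : ℕ) = 0) (hu : (φ u : ℕ) = Fintype.card V - 1)
    (p : T.Walk v u) (hp : p.IsPath) :
    ∀ i j : Fin p.support.length, (i : ℕ) + 1 = (j : ℕ) →
      φ (p.support.get i) < φ (p.support.get j) := by
  rintro ⟨i, _⟩ ⟨j, hj⟩ (rfl : i + 1 = j)
  have hi' : i < p.length := by rw [Walk.length_support] at hj; omega
  simp only [List.get_eq_getElem, Walk.support_getElem_eq_getVert]
  obtain ⟨hva, hbu⟩ := hp.reachable_deleteEdges_getVert hi'
  exact hφ.lt_of_isBridge (p.adj_getVert_succ hi')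
    (isAcyclic_iff_forall_adj_isBridge.mp hT.isAcyclic (p.adj_getVert_succ hi')) hva hbu
    (fun z => Fin.le_def.mpr (by omega)) (fun z => Fin.le_def.mpr (by omega))

/-- An optimal linear arrangement of a tree is strictly increasing along
its spinal path (the path from the vertex labeled `1` to the vertex labeled `n`). -/
theorem tree_ola_monotone_on_spine [Fintype V]
    (T : SimpleGraph V) (hT : T.IsTree) (hn : 2 ≤ Fintype.card V)
    (φ : V ≃ Fin (Fintype.card V)) (hφ : IsOLA T φ)
    (v u : V) (hv : (φ v : ℕ) = 0) (hu : (φ u : ℕ) = Fintype.card V - 1)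
    (p : T.Walk v u) (hp : p.IsPath) :
    ∀ i j : Fin p.support.length, (i : ℕ) + 1 = (j : ℕ) →
      φ (p.support.get i) < φ (p.support.get j) :=
  tree_ola_monotone_on_spine_general T hT φ hφ v u hv hu p hp
end

section
/- Let G = (V, E) be a finite simple graph on n vertices, let φ be a layout of G, and let C be a cycle subgraph of G such that both the vertex labeled 1 and the vertex labeled n lie on C. Then Σ_{{u,v} ∈ E(C)} |φ(u) − φ(v)| ≥ 2(n − 1). In particular, every layout of the cycle graph on n vertices has linear arrangement cost at least 2(n − 1). -/
/-!
Cut the layout after each of the positions `1, …, n - 1`: an edge between positions `i < j`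
crosses exactly `j - i` of these cuts, so the cost is the sum over the cuts of the number of
edges crossing them. When every degree is even, each cut is crossed an even number of times,
since the degrees on one side sum to twice the edges inside plus the crossing edges. A walk
from the vertex in position `1` to the vertex in position `n` crosses every cut, so every cut is
crossed at least twice, giving `2 (n - 1)`.
-/

open Finset SimpleGraph
open scoped Classical

variable {V : Type*}

namespace SimpleGraph

variable (G : SimpleGraph V) [DecidableRel G.Adj]

lemma even_card_interedges_self (s : Finset V) : Even #(G.interedges s s) := by
  -- `Prod.swap` pairs the elements off without fixed points, so the count vanishes in `ZMod 2`.
  rw [← ZMod.natCast_eq_zero_iff_even, card_eq_sum_ones, Nat.cast_sum, Nat.cast_one]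
  refine sum_involution (fun p _ => p.swap) (fun _ _ => by decide) (fun p hp _ => ?_)
    (fun p hp => by rwa [swap_mem_interedges_iff]) (fun p _ => p.swap_swap)
  rw [mem_interedges_iff] at hp
  exact fun h => hp.2.2.ne (congrArg Prod.fst h).symm

variable [Fintype V]

lemma card_interedges_univ_right (s : Finset V) :
    #(G.interedges s univ) = ∑ v ∈ s, G.degree v := by
  rw [interedges, Rel.interedges_eq_biUnion, card_biUnion]
  · refine sum_congr rfl fun v _ => ?_
    rw [card_map, ← card_neighborFinset_eq_degree, neighborFinset_eq_filter]
  · intro a _ b _ hab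
    simp only [Function.onFun, Finset.disjoint_left, mem_map, Function.Embedding.coeFn_mk]
    rintro _ ⟨_, _, rfl⟩ ⟨_, _, h⟩
    exact hab (congrArg Prod.fst h).symm

lemma card_interedges_self_add_card_interedges_compl (s : Finset V) :
    #(G.interedges s s) + #(G.interedges s sᶜ) = #(G.interedges s univ) := by
  rw [← card_union_of_disjoint (G.interedges_disjoint_right s disjoint_compl_right)]
  congr 1
  ext p
  simp only [mem_union, mem_interedges_iff, mem_compl, mem_univ]
  tauto

lemma even_card_interedges_compl (hG : ∀ v, Even (G.degree v)) (s : Finset V) :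
    Even #(G.interedges s sᶜ) := by
  have h := G.card_interedges_self_add_card_interedges_compl s
  rw [card_interedges_univ_right] at h
  exact (Nat.even_add.mp (h ▸ Finset.even_sum _ fun v _ => hG v)).mp
    (G.even_card_interedges_self s)

variable {G}

lemma two_le_card_interedges_compl (hG : ∀ v, Even (G.degree v)) {s : Finset V} {x y : V}
    (hxy : G.Reachable x y) (hx : x ∈ s) (hy : y ∉ s) : 2 ≤ #(G.interedges s sᶜ) := by
  obtain ⟨w⟩ := hxy
  obtain ⟨d, -, hd₁, hd₂⟩ := w.exists_boundary_dart s hx hy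
  have hpos : 0 < #(G.interedges s sᶜ) :=
    card_pos.mpr ⟨d.toProd, (G.mem_interedges_iff).mpr ⟨hd₁, mem_compl.mpr hd₂, d.adj⟩⟩
  obtain ⟨r, hr⟩ := G.even_card_interedges_compl hG s
  omega

end SimpleGraph

section Layout

variable [Fintype V]

def layoutPrefix (φ : V ≃ Fin (Fintype.card V)) (k : ℕ) : Finset V := {v | (φ v : ℕ) ≤ k}

lemma mem_layoutPrefix {φ : V ≃ Fin (Fintype.card V)} {k : ℕ} {v : V} :
    v ∈ layoutPrefix φ k ↔ (φ v : ℕ) ≤ k := by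
  simp [layoutPrefix]

variable (G : SimpleGraph V) [DecidableRel G.Adj]

lemma layoutCost_eq_sum_ascending (φ : V ≃ Fin (Fintype.card V)) :
    layoutCost G φ =
      ∑ p ∈ {p : V × V | G.Adj p.1 p.2 ∧ φ p.1 < φ p.2}, ((φ p.2 : ℕ) - φ p.1) := by
  refine (sum_bij (fun p _ => s(p.1, p.2)) (fun p hp => ?_) (fun p hp q hq hpq => ?_)
    (fun e he => ?_) (fun p hp => ?_)).symm
  · simp_all
  · simp only [mem_filter, mem_univ, true_and] at hp hq
    rcases Sym2.mk_eq_mk_iff.mp hpq with h | h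
    · exact h
    · rw [h] at hp
      exact absurd hp.2 hq.2.asymm
  · induction e with
    | _ u v =>
      replace he : G.Adj u v := by simpa using he
      rcases lt_or_gt_of_ne (φ.injective.ne he.ne) with h | h
      · exact ⟨(u, v), by simp [he, h], rfl⟩
      · exact ⟨(v, u), by simp [he.symm, h], Sym2.eq_swap⟩
  · simp only [mem_filter, mem_univ, true_and] at hp
    simp only [Sym2.lift_mk]
    have : (φ p.1 : ℕ) < φ p.2 := hp.2
    omega

lemma layoutCost_eq_sum_card_interedges (φ : V ≃ Fin (Fintype.card V)) :
    layoutCost G φ = ∑ k ∈ range (Fintype.card V - 1),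
      #(G.interedges (layoutPrefix φ k) (layoutPrefix φ k)ᶜ) := by
  let ascending : Finset (V × V) := {p | G.Adj p.1 p.2 ∧ φ p.1 < φ p.2}
  let separates (p : V × V) (k : ℕ) : Prop := (φ p.1 : ℕ) ≤ k ∧ k < φ p.2
  have hgap : ∀ p ∈ ascending,
      (φ p.2 : ℕ) - φ p.1 = #((range (Fintype.card V - 1)).bipartiteAbove separates p) := by
    intro p _
    have : (range (Fintype.card V - 1)).bipartiteAbove separates p =
        Ico (φ p.1 : ℕ) (φ p.2) := by
      have := (φ p.2).isLt
      ext k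
      simp only [bipartiteAbove, separates, mem_filter, mem_range, mem_Ico]
      omega
    rw [this, Nat.card_Ico]
  have hcut : ∀ k, ascending.bipartiteBelow separates k =
      G.interedges (layoutPrefix φ k) (layoutPrefix φ k)ᶜ := by
    intro k
    ext p
    simp only [bipartiteBelow, ascending, separates, mem_filter, mem_univ, true_and,
      mem_interedges_iff, mem_compl, mem_layoutPrefix, Fin.lt_def, not_le]
    constructor
    · rintro ⟨⟨hadj, -⟩, hle, hlt⟩
      exact ⟨hle, hlt, hadj⟩
    · rintro ⟨hle, hlt, hadj⟩
      exact ⟨⟨hadj, by omega⟩, hle, hlt⟩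
  rw [layoutCost_eq_sum_ascending, sum_congr rfl hgap,
    sum_card_bipartiteAbove_eq_sum_card_bipartiteBelow]
  simp only [hcut]

variable {G}

theorem two_mul_card_sub_one_le_layoutCost (hG : ∀ v, Even (G.degree v))
    (φ : V ≃ Fin (Fintype.card V)) {x y : V} (hxy : G.Reachable x y)
    (hx : (φ x : ℕ) = 0) (hy : (φ y : ℕ) = Fintype.card V - 1) :
    2 * (Fintype.card V - 1) ≤ layoutCost G φ := by
  have hcut : ∀ k ∈ range (Fintype.card V - 1),
      2 ≤ #(G.interedges (layoutPrefix φ k) (layoutPrefix φ k)ᶜ) := fun k hk =>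
    two_le_card_interedges_compl hG hxy (mem_layoutPrefix.mpr (by omega))
      (by rw [mem_range] at hk; rw [mem_layoutPrefix]; omega)
  calc 2 * (Fintype.card V - 1) = ∑ _k ∈ range (Fintype.card V - 1), 2 := by
        rw [sum_const, card_range, smul_eq_mul, mul_comm]
    _ ≤ _ := sum_le_sum hcut
    _ = layoutCost G φ := (layoutCost_eq_sum_card_interedges G φ).symm

theorem two_mul_sub_one_le_layoutCost_cycleGraph {m : ℕ} (hm : 3 ≤ m)
    (ψ : Fin m ≃ Fin (Fintype.card (Fin m))) :
    2 * (m - 1) ≤ layoutCost (cycleGraph m) ψ := by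
  obtain ⟨n, rfl⟩ : ∃ n, m = n + 3 := ⟨m - 3, by omega⟩
  have hcard : Fintype.card (Fin (n + 3)) = n + 3 := Fintype.card_fin _
  have h := two_mul_card_sub_one_le_layoutCost
    (fun _ => cycleGraph_degree_three_le ▸ even_two) ψ
    (cycleGraph_preconnected (ψ.symm ⟨0, by omega⟩) (ψ.symm ⟨n + 2, by omega⟩))
    (by simp) (by simp [hcard])
  rwa [hcard] at h

end Layout

theorem cycle_through_extremes_cost_lower_bound_general [Fintype V]
    (C : SimpleGraph V)
    (hdeg : ∀ v ∈ C.support, C.degree v = 2)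
    (hconn : ∀ x y : V, x ∈ C.support → y ∈ C.support → C.Reachable x y)
    (φ : V ≃ Fin (Fintype.card V))
    (x y : V) (hx : (φ x : ℕ) = 0) (hy : (φ y : ℕ) = Fintype.card V - 1)
    (hxC : x ∈ C.support) (hyC : y ∈ C.support) :
    2 * (Fintype.card V - 1) ≤ layoutCost C φ ∧
    ∀ (m : ℕ), 3 ≤ m → ∀ ψ : Fin m ≃ Fin (Fintype.card (Fin m)),
      2 * (m - 1) ≤ layoutCost (SimpleGraph.cycleGraph m) ψ := by
  have hCeven : ∀ v, Even (C.degree v) := fun v => by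
    by_cases hv : v ∈ C.support
    · exact hdeg v hv ▸ even_two
    · exact (C.degree_eq_zero_iff_notMem_support v).mpr hv ▸ Even.zero
  exact ⟨two_mul_card_sub_one_le_layoutCost hCeven φ (hconn x y hxC hyC) hx hy,
    fun _ hm ψ => two_mul_sub_one_le_layoutCost_cycleGraph hm ψ⟩

/-- If `C` is a cycle subgraph of `G` (a subgraph which is connected on its
support and in which every support vertex has degree exactly `2`) containing both the
vertex labeled `1` and the vertex labeled `n` of a layout `φ`, then the total expansion of
the edges of `C` is at least `2(n-1)`.  In particular every layout of the cycle graph on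
`m ≥ 3` vertices has linear arrangement cost at least `2(m-1)`. -/
theorem cycle_through_extremes_cost_lower_bound [Fintype V]
    (G C : SimpleGraph V) (hle : C ≤ G)
    (hdeg : ∀ v ∈ C.support, C.degree v = 2)
    (hconn : ∀ x y : V, x ∈ C.support → y ∈ C.support → C.Reachable x y)
    (φ : V ≃ Fin (Fintype.card V))
    (x y : V) (hx : (φ x : ℕ) = 0) (hy : (φ y : ℕ) = Fintype.card V - 1)
    (hxC : x ∈ C.support) (hyC : y ∈ C.support) :
    2 * (Fintype.card V - 1) ≤ layoutCost C φ ∧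
    ∀ (m : ℕ), 3 ≤ m → ∀ ψ : Fin m ≃ Fin (Fintype.card (Fin m)),
      2 * (m - 1) ≤ layoutCost (SimpleGraph.cycleGraph m) ψ :=
  cycle_through_extremes_cost_lower_bound_general C hdeg hconn φ x y hx hy hxC hyC
end
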